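/- arXiv:1407.1015 — 2 statements merged into one kernel-verified Lean document; each statement's English description precedes it below -/
import Mathlib

section
/- Every HT-algebra satisfies the Ivo Thomas axiom: for all a,b,c ∈ A, ((a ⇒ c) ⇒ b) ⇒ (((b ⇒ a) ⇒ b) ⇒ b) = 1. -/
/-- A HT-algebra: a Heyting algebra with unary operations `S 0` (= S₁), `S 1` (= S₂)
satisfying (HT2)–(HT7).  (Note: in a Heyting algebra, ¬a = a ⇨ ⊥ = aᶜ.) -/
structure HTAlgebra (A : Type*) [HeytingAlgebra A] where
  S : Fin 2 → A → A
  /-- (HT2) each Sᵢ preserves ∧ -/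
  S_inf : ∀ i a b, S i (a ⊓ b) = S i a ⊓ S i b
  /-- (HT2) each Sᵢ preserves ∨ -/
  S_sup : ∀ i a b, S i (a ⊔ b) = S i a ⊔ S i b
  /-- (HT3) S₂(a ⇒ b) = S₂a ⇒ S₂b -/
  S2_himp : ∀ a b, S 1 (a ⇨ b) = S 1 a ⇨ S 1 b
  /-- (HT4) S₁(a ⇒ b) = (S₁a ⇒ S₁b) ∧ (S₂a ⇒ S₂b) -/
  S1_himp : ∀ a b, S 0 (a ⇨ b) = (S 0 a ⇨ S 0 b) ⊓ (S 1 a ⇨ S 1 b)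
  /-- (HT5) SᵢSⱼa = Sⱼa -/
  S_S : ∀ i j a, S i (S j a) = S j a
  /-- (HT6) S₁a ∨ a = a -/
  S1_sup_self : ∀ a, S 0 a ⊔ a = a
  /-- (HT7) S₁a ∨ ¬S₁a = 1 -/
  S1_lem : ∀ a, S 0 a ⊔ (S 0 a)ᶜ = ⊤

/-!
It suffices to show `((a ⇒ c) ⇒ b) ∧ ((b ⇒ a) ⇒ b) ≤ b`. The elements `S₁b` and `S₂a` are
complemented, `S₁b ≤ b` and `a ≤ S₂a`, and (HT4) gives `¬S₁b ∧ S₂a ≤ S₁(b ⇒ a) ≤ b ⇒ a`.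
Splitting along `S₁b` and then `S₂a` leaves three cases: under `S₁b` we have `b` outright,
under `¬S₁b ∧ S₂a` we have `b ⇒ a` and hence `b`, and under `¬S₂a` we have `¬a ≤ a ⇒ c`
and hence `b`.
-/

theorem le_of_codisjoint_of_inf_le {α : Type*} [DistribLattice α] [OrderTop α] {u w z v : α}
    (h : Codisjoint u w) (hu : z ⊓ u ≤ v) (hw : z ⊓ w ≤ v) : z ≤ v :=
  calc z = z ⊓ (u ⊔ w) := by rw [codisjoint_iff.mp h, inf_top_eq]
    _ = z ⊓ u ⊔ z ⊓ w := inf_sup_left z u w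
    _ ≤ v := sup_le hu hw

namespace HTAlgebra

variable {A : Type*} [HeytingAlgebra A] (H : HTAlgebra A)

theorem S_mono (i : Fin 2) : Monotone (H.S i) := fun x y hxy => by
  rw [← sup_eq_right, ← H.S_sup, sup_eq_right.mpr hxy]

theorem S0_le (x : A) : H.S 0 x ≤ x :=
  sup_eq_right.mp (H.S1_sup_self x)

theorem S0_le_S1 (x : A) : H.S 0 x ≤ H.S 1 x := by
  simpa only [H.S_S 1 0] using H.S_mono 1 (H.S0_le x)

theorem le_S1 (x : A) : x ≤ H.S 1 x := by
  have h : H.S 0 (x ⇨ H.S 1 x) = ⊤ := by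
    rw [H.S1_himp, H.S_S, H.S_S, himp_self, himp_eq_top_iff.mpr (H.S0_le_S1 x), inf_top_eq]
  exact himp_eq_top_iff.mp (top_le_iff.mp (h ▸ H.S0_le _))

theorem codisjoint_S_compl (i : Fin 2) (x : A) : Codisjoint (H.S i x) (H.S i x)ᶜ := by
  simpa only [codisjoint_iff, H.S_S 0 i] using H.S1_lem (H.S i x)

theorem compl_S0_inf_S1_le_himp (a b : A) : (H.S 0 b)ᶜ ⊓ H.S 1 a ≤ b ⇨ a :=
  calc (H.S 0 b)ᶜ ⊓ H.S 1 a ≤ (H.S 0 b ⇨ H.S 0 a) ⊓ (H.S 1 b ⇨ H.S 1 a) :=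
        inf_le_inf compl_le_himp le_himp
    _ = H.S 0 (b ⇨ a) := (H.S1_himp b a).symm
    _ ≤ b ⇨ a := H.S0_le _

end HTAlgebra

/-- Every HT-algebra satisfies the Ivo Thomas axiom:
((a ⇒ c) ⇒ b) ⇒ (((b ⇒ a) ⇒ b) ⇒ b) = 1. -/
theorem stmt_6 {A : Type*} [HeytingAlgebra A] (_H : HTAlgebra A) (a b c : A) :
    ((a ⇨ c) ⇨ b) ⇨ (((b ⇨ a) ⇨ b) ⇨ b) = ⊤ := by
  rw [himp_eq_top_iff, le_himp_iff]
  refine le_of_codisjoint_of_inf_le (_H.codisjoint_S_compl 0 b)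
    (inf_le_right.trans (_H.S0_le b)) ?_
  refine le_of_codisjoint_of_inf_le (_H.codisjoint_S_compl 1 a) ?_ ?_
  · have hba : (_H.S 0 b)ᶜ ⊓ _H.S 1 a ≤ b ⇨ a := _H.compl_S0_inf_S1_le_himp a b
    calc _ ≤ ((b ⇨ a) ⇨ b) ⊓ (b ⇨ a) :=
          le_inf (inf_le_left.trans (inf_le_left.trans inf_le_right))
            ((inf_le_inf_right _ inf_le_right).trans hba)
      _ ≤ b := himp_inf_le
  · have hac : (_H.S 1 a)ᶜ ≤ a ⇨ c := (compl_le_compl (_H.le_S1 a)).trans compl_le_himp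
    calc _ ≤ ((a ⇨ c) ⇨ b) ⊓ (a ⇨ c) :=
          inf_le_inf (inf_le_left.trans inf_le_left) hac
      _ ≤ b := himp_inf_le
end

section
/- Let (A,h) be an algebraic model, W the set of prime filters of A ordered by inclusion, sᵢ(P) = {x ∈ A : Sᵢx ∈ P}, and for P ∈ W define M,P sat α by the canonical model clauses with M,P sat p iff h(p) ∈ P for propositional variables p. Then for all formulas α,β and prime filters P,Q: (1) if M,P sat α and P ⊆ Q then M,Q sat α; (2) M,P sat (α∧β) iff M,P sat α and M,P sat β; (3) M,P sat (α∨β) iff M,P sat α or M,P sat β; (4) M,P sat (α⇒β) iff for every prime filter Q with P ⊆ Q, M,Q sat α implies M,Q sat β; (5) M,P sat ¬α iff for every prime filter Q with P ⊆ Q, not M,Q sat α; (6) M,P sat Sᵢα iff M,sᵢ(P) sat α. Equivalently, for every formula α and prime filter P: M,P sat α iff h(α) ∈ P. -/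
/-- Formulas: propositional variables (indexed by ℕ) combined with
∧, ∨, ⇒, ¬ and the unary connectives S₁ (= S 0), S₂ (= S 1). -/
inductive Fml : Type
  | var : ℕ → Fml
  | and : Fml → Fml → Fml
  | or : Fml → Fml → Fml
  | imp : Fml → Fml → Fml
  | neg : Fml → Fml
  | S : Fin 2 → Fml → Fml

/-- A prime filter of a lattice: a proper nonempty upward-closed subset closed
under ∧ such that a ∨ b ∈ P implies a ∈ P or b ∈ P. -/
def IsPrimeFilter {A : Type*} [Lattice A] (P : Set A) : Prop :=
  P.Nonempty ∧ P ≠ Set.univ ∧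
  (∀ a b, a ∈ P → a ≤ b → b ∈ P) ∧
  (∀ a b, a ∈ P → b ∈ P → a ⊓ b ∈ P) ∧
  (∀ a b, a ⊔ b ∈ P → a ∈ P ∨ b ∈ P)

/-- A homomorphism from formulas into a HT-algebra: a map preserving
∧, ∨, ⇒, ¬, S₁, S₂. -/
def IsHom {A : Type*} [HeytingAlgebra A] (H : HTAlgebra A) (h : Fml → A) : Prop :=
  (∀ α β, h (.and α β) = h α ⊓ h β) ∧
  (∀ α β, h (.or α β) = h α ⊔ h β) ∧
  (∀ α β, h (.imp α β) = h α ⇨ h β) ∧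
  (∀ α, h (.neg α) = (h α)ᶜ) ∧
  (∀ (i : Fin 2) α, h (.S i α) = H.S i (h α))

/-- Satisfaction at prime filters in the canonical model of an algebraic model
(A, h): the canonical clauses, with M,P sat p iff h(p) ∈ P at variables and
sᵢ(P) = {x : Sᵢx ∈ P}. -/
def PSat {A : Type*} [HeytingAlgebra A] (H : HTAlgebra A) (h : Fml → A) :
    Fml → Set A → Prop
  | .var p => fun P => h (.var p) ∈ P
  | .and α β => fun P => PSat H h α P ∧ PSat H h β P
  | .or α β => fun P => PSat H h α P ∨ PSat H h β P
  | .imp α β => fun P =>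
      ∀ Q, IsPrimeFilter Q → P ⊆ Q → PSat H h α Q → PSat H h β Q
  | .neg α => fun P => ∀ Q, IsPrimeFilter Q → P ⊆ Q → ¬ PSat H h α Q
  | .S i α => fun P => PSat H h α {x | H.S i x ∈ P}

/-! The equivalence `M,P sat α ↔ h α ∈ P` is proved by induction on `α`. The `⇒` and `¬` cases
rest on the prime filter theorem: if `a ⇨ b ∉ P`, the filter `{c | a ⇨ c ∈ P}` (which contains `P`
and `a`) is disjoint from the ideal `↓b`, so some prime ideal containing `↓b` avoids it, and its
complement is a prime filter `Q ⊇ P` with `a ∈ Q`, `b ∉ Q`. For `Sᵢ`, `sᵢ(P)` is the preimage of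
`P` under the lattice homomorphism `Sᵢ` (which fixes `⊤` by (HT3)/(HT4)), hence a prime filter
unless `Sᵢ ⊥ ∈ P`; in that case `sᵢ(P) = A`, where every formula holds. Heredity follows from
the equivalence, and (2)–(6) are the defining clauses of satisfaction. -/

theorem Order.Ideal.IsPrime.isPrimeFilter_compl {α : Type*} [Lattice α] {J : Order.Ideal α}
    (hJ : J.IsPrime) : IsPrimeFilter (J : Set α)ᶜ := by
  refine ⟨?_, ?_, fun a b ha hab hb => ha (J.lower hab hb), ?_, ?_⟩
  · exact (Set.ne_univ_iff_exists_notMem _).mp hJ.ne_univ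
  · exact fun h => J.nonempty.elim fun a ha => Set.eq_univ_iff_forall.mp h a ha
  · exact fun a b ha hb hab => (hJ.mem_or_mem hab).elim ha hb
  · intro a b hab
    by_contra! h
    exact hab (Order.Ideal.sup_mem (not_not.mp h.1) (not_not.mp h.2))

namespace IsPrimeFilter

section Lattice

variable {α : Type*} [Lattice α] {P : Set α}

theorem ne_univ (hP : IsPrimeFilter P) : P ≠ Set.univ :=
  hP.2.1

theorem mem_of_le (hP : IsPrimeFilter P) {a b : α} (ha : a ∈ P) (hab : a ≤ b) : b ∈ P :=
  hP.2.2.1 a b ha hab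

theorem inf_mem_iff (hP : IsPrimeFilter P) {a b : α} : a ⊓ b ∈ P ↔ a ∈ P ∧ b ∈ P :=
  ⟨fun h => ⟨hP.mem_of_le h inf_le_left, hP.mem_of_le h inf_le_right⟩,
    fun h => hP.2.2.2.1 a b h.1 h.2⟩

theorem sup_mem_iff (hP : IsPrimeFilter P) {a b : α} : a ⊔ b ∈ P ↔ a ∈ P ∨ b ∈ P :=
  ⟨hP.2.2.2.2 a b, fun h => h.elim (hP.mem_of_le · le_sup_left) (hP.mem_of_le · le_sup_right)⟩

theorem preimage {β : Type*} [Lattice β] {Q : Set β} (hQ : IsPrimeFilter Q) (f : LatticeHom α β)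
    (hne : (f ⁻¹' Q).Nonempty) (hne_univ : f ⁻¹' Q ≠ Set.univ) : IsPrimeFilter (f ⁻¹' Q) := by
  refine ⟨hne, hne_univ, fun a b ha hab => hQ.mem_of_le ha (OrderHomClass.mono f hab), ?_, ?_⟩
  · intro a b ha hb
    simpa only [Set.mem_preimage, map_inf, hQ.inf_mem_iff] using And.intro ha hb
  · intro a b hab
    simpa only [Set.mem_preimage, map_sup, hQ.sup_mem_iff] using hab

end Lattice

section HeytingAlgebra

variable {α : Type*} [HeytingAlgebra α] {P : Set α}

theorem top_mem (hP : IsPrimeFilter P) : (⊤ : α) ∈ P :=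
  hP.1.elim fun _ ha => hP.mem_of_le ha le_top

theorem bot_notMem (hP : IsPrimeFilter P) : (⊥ : α) ∉ P := fun h =>
  hP.ne_univ (Set.eq_univ_of_forall fun _ => hP.mem_of_le h bot_le)

theorem isPFilter_setOf_himp_mem (hP : IsPrimeFilter P) (a : α) :
    Order.IsPFilter {b | a ⇨ b ∈ P} := by
  refine .of_def ⟨⊤, by simpa using hP.top_mem⟩ ?_ ?_
  · intro b hb c hc
    refine ⟨b ⊓ c, ?_, inf_le_left, inf_le_right⟩
    simpa only [Set.mem_ofPred_eq, himp_inf_distrib, hP.inf_mem_iff] using And.intro hb hc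
  · intro b c hbc hb
    exact hP.mem_of_le hb (himp_le_himp_left hbc)

theorem exists_of_himp_notMem (hP : IsPrimeFilter P) {a b : α} (hab : a ⇨ b ∉ P) :
    ∃ Q, IsPrimeFilter Q ∧ P ⊆ Q ∧ a ∈ Q ∧ b ∉ Q := by
  set F := (hP.isPFilter_setOf_himp_mem a).toPFilter
  have hdisj : Disjoint (F : Set α) (Order.Ideal.principal b) :=
    Set.disjoint_left.mpr fun c hc hcb => hab (hP.mem_of_le hc (himp_le_himp_left hcb))
  obtain ⟨J, hJ, hbJ, hFJ⟩ := DistribLattice.prime_ideal_of_disjoint_filter_ideal hdisj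
  have hFQ : (F : Set α) ⊆ (J : Set α)ᶜ := hFJ.subset_compl_right
  refine ⟨_, hJ.isPrimeFilter_compl, fun c hc => hFQ ?_, hFQ ?_, not_not.mpr (hbJ le_rfl)⟩
  · exact hP.mem_of_le hc le_himp
  · exact show a ⇨ a ∈ P from himp_self (a := a) ▸ hP.top_mem

theorem himp_mem_iff (hP : IsPrimeFilter P) {a b : α} :
    a ⇨ b ∈ P ↔ ∀ Q, IsPrimeFilter Q → P ⊆ Q → a ∈ Q → b ∈ Q := by
  refine ⟨fun hab Q hQ hPQ ha => ?_, fun h => ?_⟩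
  · exact hQ.mem_of_le (hQ.inf_mem_iff.mpr ⟨hPQ hab, ha⟩) himp_inf_le
  · by_contra hab
    obtain ⟨Q, hQ, hPQ, ha, hb⟩ := hP.exists_of_himp_notMem hab
    exact hb (h Q hQ hPQ ha)

theorem compl_mem_iff (hP : IsPrimeFilter P) {a : α} :
    aᶜ ∈ P ↔ ∀ Q, IsPrimeFilter Q → P ⊆ Q → a ∉ Q := by
  rw [← himp_bot, hP.himp_mem_iff]
  exact forall₃_congr fun Q hQ _ => imp_congr_right fun _ => iff_false_intro hQ.bot_notMem

end HeytingAlgebra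

end IsPrimeFilter

namespace HTAlgebra

variable {A : Type*} [HeytingAlgebra A] (H : HTAlgebra A)

def toLatticeHom (i : Fin 2) : LatticeHom A A where
  toFun := H.S i
  map_sup' := H.S_sup i
  map_inf' := H.S_inf i

@[simp]
theorem toLatticeHom_apply (i : Fin 2) (a : A) : H.toLatticeHom i a = H.S i a :=
  rfl

theorem S_top (i : Fin 2) : H.S i ⊤ = ⊤ := by
  fin_cases i
  · simpa [himp_self] using H.S1_himp ⊥ ⊥
  · simpa [himp_self] using H.S2_himp ⊥ ⊥

end HTAlgebra

section CanonicalModel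

variable {A : Type*} [HeytingAlgebra A] (H : HTAlgebra A) (h : Fml → A)

theorem PSat_univ (α : Fml) : PSat H h α Set.univ := by
  induction α with
  | var p => exact Set.mem_univ _
  | and α β ihα ihβ => exact ⟨ihα, ihβ⟩
  | or α β ihα _ => exact Or.inl ihα
  | imp α β _ _ => exact fun Q hQ hsub _ => absurd (Set.univ_subset_iff.mp hsub) hQ.ne_univ
  | neg α _ => exact fun Q hQ hsub _ => hQ.ne_univ (Set.univ_subset_iff.mp hsub)
  | S i α ihα => simpa only [PSat, Set.mem_univ, Set.ofPred_true] using ihα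

theorem PSat_iff_mem (hh : IsHom H h) (α : Fml) {P : Set A} (hP : IsPrimeFilter P) :
    PSat H h α P ↔ h α ∈ P := by
  obtain ⟨h_and, h_or, h_imp, h_neg, h_S⟩ := hh
  induction α generalizing P with
  | var p => rfl
  | and α β ihα ihβ => rw [h_and, hP.inf_mem_iff, ← ihα hP, ← ihβ hP]; rfl
  | or α β ihα ihβ => rw [h_or, hP.sup_mem_iff, ← ihα hP, ← ihβ hP]; rfl
  | imp α β ihα ihβ =>
    rw [h_imp, hP.himp_mem_iff]
    exact forall₃_congr fun Q hQ _ => imp_congr (ihα hQ) (ihβ hQ)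
  | neg α ihα =>
    rw [h_neg, hP.compl_mem_iff]
    exact forall₃_congr fun Q hQ _ => not_congr (ihα hQ)
  | S i α ihα =>
    rw [h_S]
    change PSat H h α (H.toLatticeHom i ⁻¹' P) ↔ H.toLatticeHom i (h α) ∈ P
    by_cases hbot : H.S i ⊥ ∈ P
    · -- here `sᵢ(P)` is all of `A`, which is not a prime filter
      have hall : ∀ a, H.toLatticeHom i a ∈ P :=
        fun a => hP.mem_of_le hbot (OrderHomClass.mono (H.toLatticeHom i) bot_le)
      have huniv : H.toLatticeHom i ⁻¹' P = Set.univ := Set.eq_univ_of_forall hall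
      exact iff_of_true (huniv ▸ PSat_univ H h α) (hall _)
    · refine ihα (hP.preimage _ ⟨⊤, ?_⟩ fun huniv => hbot ?_)
      · simpa [H.S_top] using hP.top_mem
      · exact Set.eq_univ_iff_forall.mp huniv ⊥

end CanonicalModel

/-- Proposition 5.4: properties (1)–(6) of canonical satisfaction, and the
key equivalence: M,P sat α iff h(α) ∈ P. -/
theorem stmt_15 {A : Type*} [HeytingAlgebra A] (H : HTAlgebra A)
    (h : Fml → A) (hh : IsHom H h) :
    -- (1) heredity
    (∀ (α : Fml) (P Q : Set A), IsPrimeFilter P → IsPrimeFilter Q →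
      PSat H h α P → P ⊆ Q → PSat H h α Q) ∧
    -- (2)
    (∀ (α β : Fml) (P : Set A), IsPrimeFilter P →
      (PSat H h (.and α β) P ↔ PSat H h α P ∧ PSat H h β P)) ∧
    -- (3)
    (∀ (α β : Fml) (P : Set A), IsPrimeFilter P →
      (PSat H h (.or α β) P ↔ PSat H h α P ∨ PSat H h β P)) ∧
    -- (4)
    (∀ (α β : Fml) (P : Set A), IsPrimeFilter P →
      (PSat H h (.imp α β) P ↔
        ∀ Q, IsPrimeFilter Q → P ⊆ Q → PSat H h α Q → PSat H h β Q)) ∧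
    -- (5)
    (∀ (α : Fml) (P : Set A), IsPrimeFilter P →
      (PSat H h (.neg α) P ↔ ∀ Q, IsPrimeFilter Q → P ⊆ Q → ¬ PSat H h α Q)) ∧
    -- (6)
    (∀ (i : Fin 2) (α : Fml) (P : Set A), IsPrimeFilter P →
      (PSat H h (.S i α) P ↔ PSat H h α {x | H.S i x ∈ P})) ∧
    -- equivalently: M,P sat α iff h(α) ∈ P
    (∀ (α : Fml) (P : Set A), IsPrimeFilter P → (PSat H h α P ↔ h α ∈ P)) := by
  have key := fun α P (hP : IsPrimeFilter P) => PSat_iff_mem H h hh α hP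
  refine ⟨?_, fun _ _ _ _ => Iff.rfl, fun _ _ _ _ => Iff.rfl, fun _ _ _ _ => Iff.rfl,
    fun _ _ _ => Iff.rfl, fun _ _ _ _ => Iff.rfl, key⟩
  exact fun α P Q hP hQ hα hPQ => (key α Q hQ).mpr (hPQ ((key α P hP).mp hα))
end
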